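/- Let α, β > 0, γ ≠ 0 and a > 0, and let F(λ) = ((aλ)^α + λ^{2β})^γ, a differentiable strictly monotone bijection from (0, ∞) onto (0, ∞) (increasing if γ > 0, decreasing if γ < 0). Let g : (0, ∞) → (0, ∞) be its inverse. Then g is differentiable and for every μ > 0, writing λ = g(μ), one has λ / (|γ| · max(α, 2β) · μ) ≤ |g′(μ)| ≤ λ / (|γ| · min(α, 2β) · μ). In particular |g′(μ)| is comparable to μ^{−1} λ with constants depending only on α, β, γ. -/

import Mathlib

open Set

/-! The elasticity `λ F'(λ) / F(λ)` of `F(λ) = ((aλ)^α + λ^(2β))^γ` is `γ` times the mean of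
`α` and `2β` weighted by `(aλ)^α` and `λ^(2β)`, so its absolute value lies between
`|γ| min(α, 2β)` and `|γ| max(α, 2β)`. Since `g'(μ) = 1 / F'(λ) = λ / (μ · elasticity)`,
the bounds on `|g'(μ)|` follow. -/

section WeightedMean

variable {p q A B : ℝ}

theorem min_le_weighted_mean (hA : 0 ≤ A) (hB : 0 ≤ B) (hAB : 0 < A + B) :
    min p q ≤ (p * A + q * B) / (A + B) := by
  rw [le_div_iff₀ hAB, mul_add]
  gcongr
  · exact min_le_left p q
  · exact min_le_right p q

theorem weighted_mean_le_max (hA : 0 ≤ A) (hB : 0 ≤ B) (hAB : 0 < A + B) :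
    (p * A + q * B) / (A + B) ≤ max p q := by
  rw [div_le_iff₀ hAB, mul_add]
  gcongr
  · exact le_max_left p q
  · exact le_max_right p q

end WeightedMean

theorem Real.hasStrictDerivAt_rpow_const_of_pos {x : ℝ} (p : ℝ) (hx : 0 < x) :
    HasStrictDerivAt (fun y : ℝ => y ^ p) (p * x ^ p / x) x := by
  rw [mul_div_assoc, ← Real.rpow_sub_one hx.ne']
  exact Real.hasStrictDerivAt_rpow_const (Or.inl hx.ne')

theorem hasStrictDerivAt_rpow_add_rpow_rpow (p q γ : ℝ) {a l : ℝ} (ha : 0 < a) (hl : 0 < l) :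
    HasStrictDerivAt (fun x : ℝ => ((a * x) ^ p + x ^ q) ^ γ)
      (γ * ((p * (a * l) ^ p + q * l ^ q) / ((a * l) ^ p + l ^ q)) *
        ((a * l) ^ p + l ^ q) ^ γ / l) l := by
  have hal : 0 < a * l := mul_pos ha hl
  have hS : 0 < (a * l) ^ p + l ^ q := by positivity
  have hA := (Real.hasStrictDerivAt_rpow_const_of_pos p hal).comp l
    ((hasStrictDerivAt_id l).const_mul a)
  have hB := Real.hasStrictDerivAt_rpow_const_of_pos q hl
  refine ((Real.hasStrictDerivAt_rpow_const_of_pos γ hS).comp l (hA.add hB)).congr_deriv ?_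
  field_simp

theorem inverse_spectral_parameter_derivative_bound (α β γ a : ℝ)
    (hα : 0 < α) (hβ : 0 < β) (hγ : γ ≠ 0) (ha : 0 < a)
    (g : ℝ → ℝ)
    (hg : ∀ μ ∈ Ioi (0 : ℝ), 0 < g μ ∧ ((a * g μ) ^ α + (g μ) ^ (2 * β)) ^ γ = μ)
    (hginv : ∀ l ∈ Ioi (0 : ℝ), g (((a * l) ^ α + l ^ (2 * β)) ^ γ) = l) :
    ∀ μ ∈ Ioi (0 : ℝ),
      DifferentiableAt ℝ g μ ∧
      g μ / (|γ| * max α (2 * β) * μ) ≤ |deriv g μ| ∧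
      |deriv g μ| ≤ g μ / (|γ| * min α (2 * β) * μ) := by
  intro μ hμ
  obtain ⟨hl, hFl⟩ := hg μ hμ
  set l := g μ
  have hA : 0 < (a * l) ^ α := by have := mul_pos ha hl; positivity
  have hB : 0 < l ^ (2 * β) := by positivity
  set m := (α * (a * l) ^ α + 2 * β * l ^ (2 * β)) / ((a * l) ^ α + l ^ (2 * β))
  have hm_min := min_le_weighted_mean (p := α) (q := 2 * β) hA.le hB.le (add_pos hA hB)
  have hm_max := weighted_mean_le_max (p := α) (q := 2 * β) hA.le hB.le (add_pos hA hB)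
  have hmin : 0 < min α (2 * β) := lt_min hα (by positivity)
  have hm : 0 < m := hmin.trans_le hm_min
  have hF := hasStrictDerivAt_rpow_add_rpow_rpow α (2 * β) γ ha hl
  rw [hFl] at hF
  have hμ' : (0 : ℝ) < μ := hμ
  have hF' : γ * m * μ / l ≠ 0 := by positivity
  have hg' : HasStrictDerivAt g (γ * m * μ / l)⁻¹ μ := by
    simpa only [hFl] using hF.to_local_left_inverse hF'
      (Filter.eventually_of_mem (Ioi_mem_nhds hl) hginv)
  have habs : |deriv g μ| = l / (|γ| * m * μ) := by
    rw [hg'.hasDerivAt.deriv, inv_div, abs_div, abs_mul, abs_mul, abs_of_pos hl,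
      abs_of_pos hm, abs_of_pos hμ']
  have hγ' : 0 < |γ| := abs_pos.2 hγ
  refine ⟨hg'.hasDerivAt.differentiableAt, ?_, ?_⟩ <;> rw [habs] <;> gcongr
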